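/- arXiv:1405.4368 — 5 statements merged into one kernel-verified Lean document; each statement's English description precedes it below -/
import Mathlib

section
/- For the Cameron permutoid (Π_ρ; B_{2ρ}) of a marked group (G, A), and for b, b' ∈ B_ρ: if bb' ∈ B_ρ then p_{bb'} is the unique element of Π_ρ extending p_b·p_{b'}, and if bb' ∉ B_ρ then no element of Π_ρ extends p_b·p_{b'}. -/
/-- The identity partial permutation of `X`, represented as a graph (a set of pairs). -/
def pid (X : Type*) : Set (X × X) := {xy | xy.1 = xy.2}

/-- The composition `p·q` of two partial permutations (graphs): first apply `q`, then `p`. -/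
def pcomp {X : Type*} (p q : Set (X × X)) : Set (X × X) :=
  {xz | ∃ y, (xz.1, y) ∈ q ∧ (y, xz.2) ∈ p}

/-- The domain of a partial permutation represented as a graph. -/
def pdom {X : Type*} (p : Set (X × X)) : Set X := {x | ∃ y, (x, y) ∈ p}

/-- The range of a partial permutation represented as a graph. -/
def pran {X : Type*} (p : Set (X × X)) : Set X := {y | ∃ x, (x, y) ∈ p}

/-- The inverse of a partial permutation represented as a graph. -/
def pinv {X : Type*} (p : Set (X × X)) : Set (X × X) := {xy | (xy.2, xy.1) ∈ p}

/-- `p` is the graph of a partial permutation: a bijection between two subsets of `X`. -/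
def IsPartialPerm {X : Type*} (p : Set (X × X)) : Prop :=
  (∀ x y y', (x, y) ∈ p → (x, y') ∈ p → y = y') ∧
  (∀ x x' y, (x, y) ∈ p → (x', y) ∈ p → x = x')

/-- A permutoid on `X`: a set of partial permutations (with nonempty domains) of `X`,
containing the identity of `X`, such that any (defined, i.e. nonempty) partial composition
of two members has at most one extension in the set.  Here `q` extends `p` iff `p ⊆ q`
as graphs. -/
structure IsPermutoid {X : Type*} (S : Set (Set (X × X))) : Prop where
  partialPerm : ∀ p ∈ S, IsPartialPerm p
  nonempty : ∀ p ∈ S, p.Nonempty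
  id_mem : pid X ∈ S
  unique_ext : ∀ p ∈ S, ∀ q ∈ S, ∀ r ∈ S, ∀ r' ∈ S,
    (pcomp p q).Nonempty → pcomp p q ⊆ r → pcomp p q ⊆ r' → r = r'

/-- A morphism of permutoids `(φ, Φ) : (S; X) → (S'; X')`. -/
structure IsPermutoidHom {X X' : Type*} (S : Set (Set (X × X))) (S' : Set (Set (X' × X')))
    (φ : Set (X × X) → Set (X' × X')) (Φ : X → X') : Prop where
  maps : ∀ p ∈ S, φ p ∈ S'
  map_id : φ (pid X) = pid X'
  map_rel : ∀ p ∈ S, ∀ x y, (x, y) ∈ p → (Φ x, Φ y) ∈ φ p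
  map_comp : ∀ p ∈ S, ∀ q ∈ S, ∀ r ∈ S, (pcomp p q).Nonempty → pcomp p q ⊆ r →
    pcomp (φ p) (φ q) ⊆ φ r

/-- The permutoid is complete: all its elements are (graphs of) full permutations of `X`. -/
def IsCompletePermutoid {X : Type*} (S : Set (Set (X × X))) : Prop :=
  ∀ p ∈ S, pdom p = Set.univ ∧ pran p = Set.univ

/-- The relators of the universal group of a permutoid: `p q = r` whenever `r ∈ S` extends
the (defined) composition `p·q`. -/
def permutoidRels {X : Type*} (S : Set (Set (X × X))) : Set (FreeGroup ↥S) :=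
  {w | ∃ p q r : ↥S, (pcomp p.1 q.1).Nonempty ∧ pcomp p.1 q.1 ⊆ r.1 ∧
    w = FreeGroup.of p * FreeGroup.of q * (FreeGroup.of r)⁻¹}

/-- The universal group `Γ(S; X)` of a permutoid. -/
abbrev UniversalGroup {X : Type*} (S : Set (Set (X × X))) : Type _ :=
  PresentedGroup (permutoidRels S)

/-- A finite permutoid is developable if it admits a complete finite extension. -/
def Developable {X : Type*} (S : Set (Set (X × X))) : Prop :=
  ∃ (Y : Type) (S' : Set (Set (Y × Y))) (φ : Set (X × X) → Set (Y × Y)) (Φ : X → Y),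
    Finite Y ∧ IsPermutoid S' ∧ IsPermutoidHom S S' φ Φ ∧ Function.Injective Φ ∧
    IsCompletePermutoid S'
/-- The ball of radius `r` about the identity in the word metric on `G` determined by a
generating set `A`: elements expressible as products of at most `r` elements of `A ∪ A⁻¹`. -/
def wordBall {G : Type*} [Group G] (A : Set G) (r : ℕ) : Set G :=
  {g | ∃ l : List G, l.length ≤ r ∧ (∀ a ∈ l, a ∈ A ∨ a⁻¹ ∈ A) ∧ l.prod = g}

open scoped Classical in
/-- The element `p_b` of the Cameron permutoid: for `b = 1` it is the identity of
`B_{2ρ}`, and for `b ≠ 1` it is left multiplication by `b`, viewed as a partial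
permutation `B_ρ → B_{2ρ}` of the set `B_{2ρ}` (represented as a graph). -/
noncomputable def camP {G : Type*} [Group G] (A : Set G) (ρ : ℕ) (b : G) :
    Set (↥(wordBall A (2 * ρ)) × ↥(wordBall A (2 * ρ))) :=
  if b = 1 then pid ↥(wordBall A (2 * ρ))
  else {xy | (xy.1 : G) ∈ wordBall A ρ ∧ b * (xy.1 : G) = (xy.2 : G)}

/-- The Cameron permutoid `Π_ρ = {p_b : b ∈ B_ρ}` on the set `B_{2ρ}`. -/
def cameronCarrier {G : Type*} [Group G] (A : Set G) (ρ : ℕ) :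
    Set (Set (↥(wordBall A (2 * ρ)) × ↥(wordBall A (2 * ρ)))) :=
  {p | ∃ b ∈ wordBall A ρ, p = camP A ρ b}

lemma one_mem_wordBall {G : Type*} [Group G] (A : Set G) (r : ℕ) : (1:G) ∈ wordBall A r :=
  ⟨[], by simp, by simp, by simp⟩

lemma wordBall_mono {G : Type*} [Group G] (A : Set G) {r s : ℕ} (h : r ≤ s) :
    wordBall A r ⊆ wordBall A s := fun _ ⟨l, hl, ha, hp⟩ => ⟨l, hl.trans h, ha, hp⟩

lemma mul_mem_wordBall {G : Type*} [Group G] {A : Set G} {r s : ℕ} {x y : G}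
    (hx : x ∈ wordBall A r) (hy : y ∈ wordBall A s) : x * y ∈ wordBall A (r + s) := by
  obtain ⟨l, hl, ha, hp⟩ := hx
  obtain ⟨l', hl', ha', hp'⟩ := hy
  exact ⟨l ++ l', by simp only [List.length_append]; omega,
    fun a h => (List.mem_append.1 h).elim (ha a) (ha' a), by simp [hp, hp']⟩

lemma camP_mul {G : Type*} [Group G] {A : Set G} {ρ : ℕ} {b : G}
    {x y : ↥(wordBall A (2*ρ))} (h : (x, y) ∈ camP A ρ b) : b * (x:G) = y := by
  unfold camP at h
  split_ifs at h with hb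
  · have : x = y := h
    subst hb; simp [this]
  · exact h.2

lemma camP_dom {G : Type*} [Group G] {A : Set G} {ρ : ℕ} {b : G} (hb : b ≠ 1)
    {x y : ↥(wordBall A (2*ρ))} (h : (x, y) ∈ camP A ρ b) : (x:G) ∈ wordBall A ρ := by
  unfold camP at h
  rw [if_neg hb] at h
  exact h.1

lemma mem_camP {G : Type*} [Group G] {A : Set G} {ρ : ℕ} {b : G}
    {x y : ↥(wordBall A (2*ρ))} (hx : b = 1 ∨ (x:G) ∈ wordBall A ρ)
    (h : b * (x:G) = y) : (x, y) ∈ camP A ρ b := by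
  unfold camP
  split_ifs with hb
  · subst hb
    rw [one_mul] at h
    exact Subtype.ext h
  · exact ⟨hx.resolve_left hb, h⟩

/-- For `b, b'` in the ball `B_ρ` of a marked group `(G, A)`: if `b b' ∈ B_ρ` then
`p_{b b'}` is the unique element of the Cameron permutoid `Π_ρ` extending the
composition `p_b · p_{b'}`, and if `b b' ∉ B_ρ` then no element of `Π_ρ` extends
`p_b · p_{b'}`. -/
theorem cameron_unique_extension {G : Type*} [Group G] (A : Set G)
    (hgen : Subgroup.closure A = ⊤) (ρ : ℕ) (hρ : 0 < ρ)
    {b b' : G} (hb : b ∈ wordBall A ρ) (hb' : b' ∈ wordBall A ρ) :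
    (b * b' ∈ wordBall A ρ →
      (pcomp (camP A ρ b) (camP A ρ b') ⊆ camP A ρ (b * b') ∧
        ∀ c ∈ wordBall A ρ,
          pcomp (camP A ρ b) (camP A ρ b') ⊆ camP A ρ c → camP A ρ c = camP A ρ (b * b'))) ∧
    (b * b' ∉ wordBall A ρ →
      ∀ c ∈ wordBall A ρ, ¬ pcomp (camP A ρ b) (camP A ρ b') ⊆ camP A ρ c) := by
  have hbb2 : b * b' ∈ wordBall A (2 * ρ) := by
    rw [two_mul]; exact mul_mem_wordBall hb hb'
  set e : ↥(wordBall A (2*ρ)) := ⟨(1:G), one_mem_wordBall A (2*ρ)⟩ with he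
  set yb : ↥(wordBall A (2*ρ)) := ⟨b', wordBall_mono A (by omega) hb'⟩ with hyb
  set z : ↥(wordBall A (2*ρ)) := ⟨b * b', hbb2⟩ with hz
  have hkey : (e, z) ∈ pcomp (camP A ρ b) (camP A ρ b') := by
    exact ⟨yb, mem_camP (Or.inr (one_mem_wordBall A ρ)) (by simp [he, hyb]),
      mem_camP (Or.inr hb') (by simp [hyb, hz])⟩
  have huniq : ∀ c, pcomp (camP A ρ b) (camP A ρ b') ⊆ camP A ρ c → c = b * b' := by
    intro c hsub
    have := camP_mul (hsub hkey)
    simpa [he, hz] using this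
  constructor
  · intro hbbρ
    constructor
    · rintro ⟨x, w⟩ ⟨y, hy1, hy2⟩
      have h1 : b' * (x:G) = y := camP_mul hy1
      have h2 : b * (y:G) = w := camP_mul hy2
      refine mem_camP ?_ (by rw [mul_assoc, h1, h2])
      by_cases hbb1 : b * b' = 1
      · exact Or.inl hbb1
      · refine Or.inr ?_
        by_cases hb'1 : b' = 1
        · have hxy : x = y := by
            apply Subtype.ext; rw [← h1, hb'1, one_mul]
          have hb1 : b ≠ 1 := by
            intro h; exact hbb1 (by rw [h, hb'1, one_mul])
          rw [hxy]; exact camP_dom hb1 hy2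
        · exact camP_dom hb'1 hy1
    · intro c _ hsub
      rw [huniq c hsub]
  · intro hbbρ c hc hsub
    exact hbbρ (huniq c hsub ▸ hc)
end

section
/- If a non-trivial finite permutoid (Π; X) is developable, then its universal group Γ(Π; X) has a non-trivial finite quotient. -/
section Aux
open Classical

/-- The function `Y → Y` determined by a graph with full domain. -/
noncomputable def graphFun {Y : Type*} (t : Set (Y × Y)) (hdom : pdom t = Set.univ) : Y → Y :=
  fun a => (show ∃ b, (a, b) ∈ t from (hdom ▸ Set.mem_univ a : a ∈ pdom t)).choose

lemma graphFun_mem {Y : Type*} (t : Set (Y × Y)) (hdom : pdom t = Set.univ) (a : Y) :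
    (a, graphFun t hdom a) ∈ t :=
  (show ∃ b, (a, b) ∈ t from (hdom ▸ Set.mem_univ a : a ∈ pdom t)).choose_spec

lemma graphFun_eq {Y : Type*} (t : Set (Y × Y)) (hdom : pdom t = Set.univ)
    (hpp : IsPartialPerm t) {a b : Y} (hab : (a, b) ∈ t) : graphFun t hdom a = b :=
  hpp.1 a _ b (graphFun_mem t hdom a) hab

/-- The permutation of a finite type determined by a full partial-permutation graph. -/
noncomputable def graphPerm {Y : Type*} [Finite Y] (t : Set (Y × Y))
    (hpp : IsPartialPerm t) (hdom : pdom t = Set.univ) : Equiv.Perm Y :=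
  Equiv.ofBijective (graphFun t hdom) (Finite.injective_iff_bijective.mp
    (fun a a' h => hpp.2 a a' _ (graphFun_mem t hdom a) (h ▸ graphFun_mem t hdom a')))

lemma graphPerm_mem {Y : Type*} [Finite Y] (t : Set (Y × Y)) (hpp : IsPartialPerm t)
    (hdom : pdom t = Set.univ) (a : Y) : (a, graphPerm t hpp hdom a) ∈ t :=
  graphFun_mem t hdom a

lemma graphPerm_eq {Y : Type*} [Finite Y] (t : Set (Y × Y)) (hpp : IsPartialPerm t)
    (hdom : pdom t = Set.univ) {a b : Y} (hab : (a, b) ∈ t) : graphPerm t hpp hdom a = b :=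
  graphFun_eq t hdom hpp hab

end Aux

/-- If a non-trivial finite permutoid `(S; X)` is developable, then its universal group
`Γ(S; X)` has a non-trivial finite quotient. -/
theorem developable_nontrivial_finite_quotient {X : Type*} [Finite X]
    {S : Set (Set (X × X))} (hS : IsPermutoid S) (hnt : S ≠ {pid X})
    (hdev : Developable S) :
    ∃ (Q : Type) (_ : Group Q), Finite Q ∧ Nontrivial Q ∧
      ∃ f : UniversalGroup S →* Q, Function.Surjective f := by
  classical
  obtain ⟨Y, S', φ, Φ, hYfin, hS', hhom, hΦinj, hcomp⟩ := hdev
  -- the permutation associated to each generator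
  let σ : ↥S → Equiv.Perm Y := fun p =>
    graphPerm (φ p.1) (hS'.partialPerm _ (hhom.maps _ p.2))
      (hcomp _ (hhom.maps _ p.2)).1
  have hσ_eq : ∀ (p : ↥S) (a b : Y), (a, b) ∈ φ p.1 → σ p a = b := fun p a b h =>
    graphPerm_eq _ _ _ h
  have hσ_mem : ∀ (p : ↥S) (a : Y), (a, σ p a) ∈ φ p.1 := fun p a =>
    graphPerm_mem _ _ _ a
  -- relators are killed
  have hrels : ∀ r ∈ permutoidRels S, FreeGroup.lift σ r = 1 := by
    rintro w ⟨p, q, r, hne, hsub, rfl⟩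
    have hsub' := hhom.map_comp _ p.2 _ q.2 _ r.2 hne hsub
    have : σ p * σ q = σ r := by
      ext a
      have h1 : (a, σ q a) ∈ φ q.1 := hσ_mem q a
      have h2 : (σ q a, σ p (σ q a)) ∈ φ p.1 := hσ_mem p _
      have : (a, σ p (σ q a)) ∈ φ r.1 := hsub' ⟨σ q a, h1, h2⟩
      simpa [Equiv.Perm.mul_apply] using (hσ_eq r a _ this).symm
    simp [this]
  let f : UniversalGroup S →* Equiv.Perm Y := PresentedGroup.toGroup hrels
  refine ⟨f.range, inferInstance, ?_, ?_, f.rangeRestrict, f.rangeRestrict_surjective⟩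
  · exact Subtype.finite
  · -- nontriviality: pick p ∈ S, p ≠ pid X
    have hid : pid X ∈ S := hS.id_mem
    have : ∃ p ∈ S, p ≠ pid X := by
      by_contra h
      push_neg at h
      exact hnt (Set.eq_singleton_iff_unique_mem.mpr ⟨hid, h⟩)
    obtain ⟨p, hp, hpne⟩ := this
    have hσp : σ ⟨p, hp⟩ ≠ 1 := by
      intro h1
      -- then φ p = pid Y, so p ⊆ pid X, so by unique_ext p = pid X
      have hφid : φ p = pid Y := by
        ext ⟨a, b⟩
        constructor
        · intro hab
          have : σ ⟨p, hp⟩ a = b := hσ_eq ⟨p, hp⟩ a b hab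
          rw [h1] at this
          simpa [pid] using this
        · intro hab
          have hb : a = b := hab
          have := hσ_mem ⟨p, hp⟩ a
          rw [h1] at this
          simpa [hb] using this
      have hpsub : p ⊆ pid X := by
        rintro ⟨x, y⟩ hxy
        have := hhom.map_rel _ hp x y hxy
        rw [hφid] at this
        exact hΦinj this
      -- pcomp (pid X) p = p
      have hcompeq : pcomp (pid X) p = p := by
        ext ⟨x, z⟩
        constructor
        · rintro ⟨y, hy1, hy2⟩
          have : y = z := hy2
          exact this ▸ hy1
        · intro h
          exact ⟨z, h, rfl⟩
      have hne : (pcomp (pid X) p).Nonempty := by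
        rw [hcompeq]; exact hS.nonempty _ hp
      have := hS.unique_ext _ hid _ hp _ hid _ hp hne
        (by rw [hcompeq]; exact hpsub) (by rw [hcompeq])
      exact hpne this.symm
    refine ⟨⟨f (PresentedGroup.of ⟨p, hp⟩), Set.mem_range_self _⟩, 1, ?_⟩
    intro h
    apply hσp
    have : f (PresentedGroup.of ⟨p, hp⟩) = 1 := by
      have := congrArg Subtype.val h
      simpa using this
    rw [show f (PresentedGroup.of (⟨p, hp⟩ : ↥S)) = σ ⟨p, hp⟩ from
      PresentedGroup.toGroup.of hrels] at this
    exact this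
end

section
/- For any finite presentation P = ⟨A | R⟩ and integer ρ ≥ 1, the map p_b ↦ b defines a surjective group homomorphism from the universal group Γ(B_ρ(P)) of the Cameron permutoid onto |P|. -/
/-- The relators of the universal group `Γ(B_ρ(P))` of the Cameron permutoid, presented on
the generators `p_b` for `b` in the ball of radius `ρ`: `p_{b₁} p_{b₂} = p_{b₃}` whenever
`b₁ b₂ = b₃` in the group. -/
def cameronGroupRels {G : Type*} [Group G] (A : Set G) (ρ : ℕ) :
    Set (FreeGroup ↥(wordBall A ρ)) :=
  {w | ∃ b₁ b₂ b₃ : ↥(wordBall A ρ), (b₁ : G) * (b₂ : G) = (b₃ : G) ∧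
    w = FreeGroup.of b₁ * FreeGroup.of b₂ * (FreeGroup.of b₃)⁻¹}

/-- For any finite presentation `P = ⟨A | R⟩` and `ρ ≥ 1`, the map `p_b ↦ b` defines a
surjective group homomorphism from the universal group `Γ(B_ρ(P))` of the Cameron
permutoid onto `|P|`. -/
theorem cameronGroup_epi {α : Type*} [Finite α] {rels : Set (FreeGroup α)}
    (hrels : rels.Finite) (ρ : ℕ) (hρ : 1 ≤ ρ) :
    ∃ f : PresentedGroup
        (cameronGroupRels (Set.range (PresentedGroup.of : α → PresentedGroup rels)) ρ) →*
        PresentedGroup rels,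
      Function.Surjective f ∧
      ∀ b : ↥(wordBall (Set.range (PresentedGroup.of : α → PresentedGroup rels)) ρ),
        f (PresentedGroup.of b) = (b : PresentedGroup rels) := by
    classical
  set G := PresentedGroup rels
  set A : Set G := Set.range (PresentedGroup.of : α → G)
  have hrel : ∀ r ∈ cameronGroupRels A ρ,
      FreeGroup.lift (fun b : ↥(wordBall A ρ) => (b : G)) r = 1 := by
    rintro r ⟨b₁, b₂, b₃, hb, rfl⟩
    simp [hb]
  refine ⟨PresentedGroup.toGroup hrel, ?_, fun b => PresentedGroup.toGroup.of hrel⟩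
  intro g
  have : g ∈ MonoidHom.range (PresentedGroup.toGroup hrel) := by
    refine PresentedGroup.generated_by rels _ (fun a => ?_) g
    have ha : (PresentedGroup.of a : G) ∈ wordBall A ρ := by
      refine ⟨[PresentedGroup.of a], ?_, ?_, by simp⟩
      · simpa using hρ
      · intro x hx
        simp only [List.mem_singleton] at hx
        exact Or.inl ⟨a, hx.symm⟩
    exact ⟨PresentedGroup.of ⟨_, ha⟩, PresentedGroup.toGroup.of hrel⟩
  exact this
end

section
/- If P = ⟨A | R⟩ is a finite presentation and ρ is an integer greater than half the length of the longest relator in R, then the natural homomorphism Γ(B_ρ(P)) → |P| given by p_b ↦ b is an isomorphism. -/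
/-- The length of an element of a free group: the length of the reduced word
representing it. -/
noncomputable def flen {β : Type*} (w : FreeGroup β) : ℕ := by
  classical exact w.toWord.length
/-
The inverse of `p_b ↦ b` sends a generator `a` of `|P|` to `p_a`. It is well defined because
every relator `r` has length `< 2ρ`: split its word into two halves of length `≤ ρ`. Along a
word of length `≤ ρ` all partial products stay in `B_ρ`, so the relations of `Γ(B_ρ(P))`
multiply the `p_a` out to `p_u` and `p_v` for the two halves `u, v`; as `uv = r = 1` in `|P|`,
the relation `p_u p_{u⁻¹} = p_1 = 1` kills the image of `r`. The two maps are mutually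
inverse because each `b ∈ B_ρ` is a word of length `≤ ρ`, whose image multiplies out to `p_b`.
-/

section WordBall

variable {G : Type*} [Group G] {A : Set G} {n : ℕ}

theorem list_prod_mem_wordBall {l : List G} (hl : ∀ a ∈ l, a ∈ A ∨ a⁻¹ ∈ A)
    (hn : l.length ≤ n) : l.prod ∈ wordBall A n :=
  ⟨l, hn, hl, rfl⟩

theorem one_mem_wordBall_s12 : (1 : G) ∈ wordBall A n :=
  list_prod_mem_wordBall (l := []) (by simp) n.zero_le

theorem mem_wordBall_of_mem_or_inv_mem (hn : 1 ≤ n) {a : G} (ha : a ∈ A ∨ a⁻¹ ∈ A) :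
    a ∈ wordBall A n :=
  ⟨[a], by simpa, by simpa, List.prod_singleton⟩

theorem inv_mem_wordBall {g : G} (hg : g ∈ wordBall A n) : g⁻¹ ∈ wordBall A n := by
  obtain ⟨l, hl, hla, rfl⟩ := hg
  rw [List.prod_inv_reverse]
  refine list_prod_mem_wordBall ?_ (by simpa)
  simp only [List.mem_reverse, List.mem_map]
  rintro _ ⟨a, ha, rfl⟩
  simpa [or_comm] using hla a ha

end WordBall

section CameronGroup

variable {G : Type*} [Group G] {A : Set G} {ρ : ℕ}

theorem cameronGroupRels_lift_eq_one :
    ∀ r ∈ cameronGroupRels A ρ, FreeGroup.lift (fun b : wordBall A ρ ↦ (b : G)) r = 1 := by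
  rintro _ ⟨b₁, b₂, b₃, h, rfl⟩
  simp [h]

def cameronHom (A : Set G) (ρ : ℕ) : PresentedGroup (cameronGroupRels A ρ) →* G :=
  PresentedGroup.toGroup cameronGroupRels_lift_eq_one

theorem cameronHom_of (b : wordBall A ρ) : cameronHom A ρ (PresentedGroup.of b) = b :=
  PresentedGroup.toGroup.of _

theorem cameronGroup_of_mul_of {b₁ b₂ b₃ : wordBall A ρ} (h : (b₁ : G) * b₂ = b₃) :
    (PresentedGroup.of b₁ * PresentedGroup.of b₂ : PresentedGroup (cameronGroupRels A ρ)) =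
      PresentedGroup.of b₃ := by
  have := PresentedGroup.one_of_mem (rels := cameronGroupRels A ρ) ⟨b₁, b₂, b₃, h, rfl⟩
  rwa [map_mul, map_mul, map_inv, mul_inv_eq_one] at this

open scoped Classical in
noncomputable def cameronGen (A : Set G) (ρ : ℕ) (g : G) :
    PresentedGroup (cameronGroupRels A ρ) :=
  if h : g ∈ wordBall A ρ then PresentedGroup.of ⟨g, h⟩ else 1

theorem cameronGen_of_mem {g : G} (h : g ∈ wordBall A ρ) :
    cameronGen A ρ g = PresentedGroup.of ⟨g, h⟩ :=
  dif_pos h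

theorem cameronHom_cameronGen {g : G} (h : g ∈ wordBall A ρ) :
    cameronHom A ρ (cameronGen A ρ g) = g := by
  rw [cameronGen_of_mem h, cameronHom_of]

theorem cameronGen_mul {g h : G} (hg : g ∈ wordBall A ρ) (hh : h ∈ wordBall A ρ)
    (hgh : g * h ∈ wordBall A ρ) :
    cameronGen A ρ (g * h) = cameronGen A ρ g * cameronGen A ρ h := by
  rw [cameronGen_of_mem hg, cameronGen_of_mem hh, cameronGen_of_mem hgh]
  exact (cameronGroup_of_mul_of rfl).symm

theorem cameronGen_one : cameronGen A ρ (1 : G) = 1 := by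
  have h1 := one_mem_wordBall_s12 (A := A) (n := ρ)
  have := cameronGen_mul h1 h1 (by rwa [one_mul])
  rwa [one_mul, left_eq_mul] at this

theorem cameronGen_inv {g : G} (hg : g ∈ wordBall A ρ) :
    cameronGen A ρ g⁻¹ = (cameronGen A ρ g)⁻¹ := by
  have hg' := inv_mem_wordBall hg
  have := cameronGen_mul hg hg' (by simpa using one_mem_wordBall_s12 (A := A) (n := ρ))
  rw [mul_inv_cancel, cameronGen_one] at this
  exact eq_inv_of_mul_eq_one_right this.symm

theorem cameronGen_list_prod :
    ∀ l : List G, (∀ a ∈ l, a ∈ A ∨ a⁻¹ ∈ A) → l.length ≤ ρ →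
      (l.map (cameronGen A ρ)).prod = cameronGen A ρ l.prod
  | [], _, _ => by simp [cameronGen_one]
  | a :: l, hal, hlen => by
    have hl : ∀ x ∈ l, x ∈ A ∨ x⁻¹ ∈ A := fun x hx ↦ hal x (.tail _ hx)
    have hlen' : l.length ≤ ρ := (Nat.le_succ _).trans hlen
    have ha : a ∈ wordBall A ρ :=
      mem_wordBall_of_mem_or_inv_mem (by simp at hlen; omega) (hal a List.mem_cons_self)
    rw [List.map_cons, List.prod_cons, List.prod_cons, cameronGen_list_prod l hl hlen',
      cameronGen_mul ha
        (list_prod_mem_wordBall hl hlen')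
        (by simpa using list_prod_mem_wordBall hal hlen)]

theorem cameronGen_list_prod_eq_one {l : List G}
    (hl : ∀ a ∈ l, a ∈ A ∨ a⁻¹ ∈ A) (hlen : l.length ≤ 2 * ρ) (hprod : l.prod = 1) :
    (l.map (cameronGen A ρ)).prod = 1 := by
  rw [← List.take_append_drop ρ l] at hl hprod ⊢
  set u := l.take ρ
  set v := l.drop ρ
  have hu : u.length ≤ ρ := List.length_take_le ρ l
  have hv : v.length ≤ ρ := by rw [List.length_drop]; omega
  have hu' : ∀ a ∈ u, a ∈ A ∨ a⁻¹ ∈ A := fun a ha ↦ hl a (List.mem_append_left _ ha)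
  have hv' : ∀ a ∈ v, a ∈ A ∨ a⁻¹ ∈ A := fun a ha ↦ hl a (List.mem_append_right _ ha)
  have hvu : v.prod = u.prod⁻¹ := eq_inv_of_mul_eq_one_right (by rwa [← List.prod_append])
  rw [List.map_append, List.prod_append, cameronGen_list_prod u hu' hu,
    cameronGen_list_prod v hv' hv, hvu,
    cameronGen_inv (list_prod_mem_wordBall hu' hu), mul_inv_cancel]

theorem eq_cameronGen_of_mem_wordBall {ψ : G →* PresentedGroup (cameronGroupRels A ρ)}
    (hψ : ∀ a ∈ A, ψ a = cameronGen A ρ a) {g : G} (hg : g ∈ wordBall A ρ) :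
    ψ g = cameronGen A ρ g := by
  obtain ⟨l, hlen, hl, rfl⟩ := hg
  rw [map_list_prod, ← cameronGen_list_prod l hl hlen]
  refine congrArg List.prod (List.map_congr_left fun a ha ↦ ?_)
  rcases hl a ha with ha | ha
  · exact hψ a ha
  · have hρ : 1 ≤ ρ := (List.length_pos_of_mem ‹a ∈ l›).trans_le hlen
    rw [← inv_inv a, map_inv, hψ _ ha,
      cameronGen_inv (mem_wordBall_of_mem_or_inv_mem hρ (.inl ha))]

theorem lift_cameronGen_eq_one {α : Type*} [DecidableEq α] {ι : α → G}
    (hι : ∀ x, ι x ∈ A) {w : FreeGroup α} (hw : FreeGroup.lift ι w = 1)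
    (hlen : w.toWord.length ≤ 2 * ρ) :
    FreeGroup.lift (cameronGen A ρ ∘ ι) w = 1 := by
  set l := w.toWord.map fun x ↦ cond x.2 (ι x.1) (ι x.1)⁻¹
  have hl : ∀ a ∈ l, a ∈ A ∨ a⁻¹ ∈ A := by
    simp only [l, List.mem_map]
    rintro _ ⟨⟨x, _ | _⟩, -, rfl⟩ <;> simp [hι]
  have hprod : l.prod = 1 := by rw [← FreeGroup.lift_mk, FreeGroup.mk_toWord, hw]
  rw [← FreeGroup.mk_toWord (x := w), FreeGroup.lift_mk,
    ← cameronGen_list_prod_eq_one hl (by simpa [l]) hprod, List.map_map]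
  refine congrArg List.prod (List.map_congr_left fun ⟨x, b⟩ hx ↦ ?_)
  have hρ : 1 ≤ ρ := by have := List.length_pos_of_mem hx; omega
  cases b
  · exact (cameronGen_inv (mem_wordBall_of_mem_or_inv_mem hρ (.inl (hι x)))).symm
  · rfl

end CameronGroup

theorem PresentedGroup.lift_of_eq_one_of_mem {α : Type*} {rels : Set (FreeGroup α)}
    {r : FreeGroup α} (hr : r ∈ rels) :
    FreeGroup.lift (PresentedGroup.of (rels := rels)) r = 1 :=
  (FreeGroup.lift_unique (PresentedGroup.mk rels) fun _ ↦ rfl).symm.trans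
    (PresentedGroup.one_of_mem hr)

theorem flen_eq_length_toWord {β : Type*} [DecidableEq β] (w : FreeGroup β) :
    flen w = w.toWord.length := by
  unfold flen
  congr!

theorem cameronGroup_iso_general {α : Type*} {rels : Set (FreeGroup α)}
    (ρ : ℕ) (hρ1 : 1 ≤ ρ) (hρ : ∀ r ∈ rels, flen r < 2 * ρ) :
    ∃ e : PresentedGroup
        (cameronGroupRels (Set.range (PresentedGroup.of : α → PresentedGroup rels)) ρ) ≃*
        PresentedGroup rels,
      ∀ b : ↥(wordBall (Set.range (PresentedGroup.of : α → PresentedGroup rels)) ρ),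
        e (PresentedGroup.of b) = (b : PresentedGroup rels) := by
  classical
  set A := Set.range (PresentedGroup.of : α → PresentedGroup rels)
  have hA : ∀ x, (PresentedGroup.of x : PresentedGroup rels) ∈ A := Set.mem_range_self
  have hrels : ∀ r ∈ rels, FreeGroup.lift (cameronGen A ρ ∘ PresentedGroup.of) r = 1 :=
    fun r hr ↦ lift_cameronGen_eq_one hA
      (PresentedGroup.lift_of_eq_one_of_mem hr)
      (by rw [← flen_eq_length_toWord]; exact (hρ r hr).le)
  set ψ := PresentedGroup.toGroup hrels
  have hψ : ∀ g ∈ wordBall A ρ, ψ g = cameronGen A ρ g := by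
    refine fun g ↦ eq_cameronGen_of_mem_wordBall ?_
    rintro _ ⟨x, rfl⟩
    exact PresentedGroup.toGroup.of hrels
  refine ⟨(cameronHom A ρ).toMulEquiv ψ ?_ ?_, cameronHom_of⟩
  · refine PresentedGroup.ext fun b ↦ ?_
    simp only [MonoidHom.comp_apply, cameronHom_of, MonoidHom.id_apply, hψ b b.2,
      cameronGen_of_mem b.2]
  · refine PresentedGroup.ext fun x ↦ ?_
    have hx := mem_wordBall_of_mem_or_inv_mem hρ1 (.inl (hA x))
    rw [MonoidHom.comp_apply, hψ _ hx, cameronHom_cameronGen hx, MonoidHom.id_apply]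

/-- If `P = ⟨A | R⟩` is a finite presentation and `ρ` is an integer greater than half the
length of the longest relator of `R`, then the natural homomorphism `Γ(B_ρ(P)) → |P|`,
`p_b ↦ b`, is an isomorphism. -/
theorem cameronGroup_iso {α : Type*} [Finite α] {rels : Set (FreeGroup α)}
    (hrels : rels.Finite) (ρ : ℕ) (hρ1 : 1 ≤ ρ) (hρ : ∀ r ∈ rels, flen r < 2 * ρ) :
    ∃ e : PresentedGroup
        (cameronGroupRels (Set.range (PresentedGroup.of : α → PresentedGroup rels)) ρ) ≃*
        PresentedGroup rels,
      ∀ b : ↥(wordBall (Set.range (PresentedGroup.of : α → PresentedGroup rels)) ρ),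
        e (PresentedGroup.of b) = (b : PresentedGroup rels) :=
  cameronGroup_iso_general ρ hρ1 hρ
end

section
/- Let H be a rigid pseudogroup on a finite set X and Λ its set of maximal elements. Then the pseudogroup generated by Λ (all restrictions of elements of Λ and their compositions, inverses, and compatible unions) equals H. -/
/-- A pseudogroup of partial bijections of a (finite, discrete) set `X`, with partial
bijections represented as graphs. -/
structure IsPseudogroup {X : Type*} (H : Set (Set (X × X))) : Prop where
  partialPerm : ∀ h ∈ H, IsPartialPerm h
  id_mem : pid X ∈ H
  inv_mem : ∀ h ∈ H, pinv h ∈ H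
  comp_mem : ∀ h ∈ H, ∀ h' ∈ H, pcomp h h' ∈ H
  restr_mem : ∀ h ∈ H, ∀ U : Set X, {xy ∈ h | xy.1 ∈ U} ∈ H
  union_mem : ∀ h ∈ H, ∀ h' ∈ H, IsPartialPerm (h ∪ h') → h ∪ h' ∈ H

/-- A pseudogroup is rigid if whenever two of its elements agree at a point, their
union also belongs to the pseudogroup. -/
def IsRigidPseudogroup {X : Type*} (H : Set (Set (X × X))) : Prop :=
  IsPseudogroup H ∧ ∀ f ∈ H, ∀ g ∈ H, (f ∩ g).Nonempty → f ∪ g ∈ H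

/-- The set of maximal elements of a set of partial permutations. -/
def maxElts {X : Type*} (H : Set (Set (X × X))) : Set (Set (X × X)) :=
  {h ∈ H | ∀ h' ∈ H, h ⊆ h' → h' = h}

/-- The pseudogroup generated by a set of partial permutations: the smallest pseudogroup
containing it (in particular containing all restrictions of its elements). -/
def genPseudogroup {X : Type*} (S : Set (Set (X × X))) : Set (Set (X × X)) :=
  ⋂₀ {H | IsPseudogroup H ∧ S ⊆ H}

/-- A permutoid is rigid if distinct elements never agree at any point. -/
def IsRigidPermutoid {X : Type*} (S : Set (Set (X × X))) : Prop :=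
  IsPermutoid S ∧ ∀ p ∈ S, ∀ q ∈ S, p ≠ q → ∀ a : X × X, a ∈ p → a ∉ q

/-! Every element of a finite pseudogroup extends to a maximal one, and a partial permutation
contained in another is the restriction of the larger one to its own domain. So `H` consists of
restrictions of its maximal elements, which lie in any pseudogroup containing `maxElts H`. -/

section Pseudogroup

variable {X : Type*}

theorem mem_maxElts_iff_maximal {H : Set (Set (X × X))} {m : Set (X × X)} :
    m ∈ maxElts H ↔ Maximal (· ∈ H) m :=
  and_congr_right fun _ =>
    forall₂_congr fun _ _ => ⟨fun h hle => (h hle).le, fun h hle => (h hle).antisymm hle⟩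

theorem maxElts_subset (H : Set (Set (X × X))) : maxElts H ⊆ H :=
  fun _ hm => hm.1

theorem Set.Finite.exists_mem_maxElts_superset {H : Set (Set (X × X))} (hH : H.Finite)
    {h : Set (X × X)} (hh : h ∈ H) : ∃ m ∈ maxElts H, h ⊆ m := by
  obtain ⟨m, hhm, hm⟩ := hH.exists_le_maximal hh
  exact ⟨m, mem_maxElts_iff_maximal.2 hm, hhm⟩

theorem IsPartialPerm.restrict_pdom_eq_of_subset {m h : Set (X × X)} (hm : IsPartialPerm m)
    (hhm : h ⊆ m) : {xy ∈ m | xy.1 ∈ pdom h} = h := by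
  ext ⟨x, y⟩
  refine ⟨fun ⟨hxy, y', hxy'⟩ => ?_, fun hxy => ⟨hhm hxy, y, hxy⟩⟩
  rwa [hm.1 x y y' hxy (hhm hxy')]

theorem IsPseudogroup.genPseudogroup_subset {H S : Set (Set (X × X))} (hH : IsPseudogroup H)
    (hS : S ⊆ H) : genPseudogroup S ⊆ H :=
  Set.sInter_subset_of_mem ⟨hH, hS⟩

theorem restrict_mem_genPseudogroup {S : Set (Set (X × X))} {m : Set (X × X)} (hm : m ∈ S)
    (U : Set X) : {xy ∈ m | xy.1 ∈ U} ∈ genPseudogroup S :=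
  fun _ ⟨hK, hSK⟩ => hK.restr_mem m (hSK hm) U

end Pseudogroup

/-- For a rigid pseudogroup `H` on a finite set `X` with set of maximal elements `Λ`,
the pseudogroup generated by `Λ` equals `H`. -/
theorem genPseudogroup_maxElts {X : Type*} [Finite X]
    {H : Set (Set (X × X))} (hH : IsRigidPseudogroup H) :
    genPseudogroup (maxElts H) = H := by
  have hP : IsPseudogroup H := hH.1
  refine (hP.genPseudogroup_subset (maxElts_subset H)).antisymm fun h hh => ?_
  obtain ⟨m, hm, hhm⟩ := H.toFinite.exists_mem_maxElts_superset hh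
  rw [← (hP.partialPerm m hm.1).restrict_pdom_eq_of_subset hhm]
  exact restrict_mem_genPseudogroup hm _
end
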